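/- Regard the quaternions ℍ as ℂ ⊕ ℂj, so every quaternion is z₁ + z₂j with z₁, z₂ ∈ ℂ. The map F: ℂ⁴ → ℍ², F(z₁,z₂,z₃,z₄) = (z₁+z₂j, z₃+z₄j), satisfies F(z) ≠ 0 for z ≠ 0 and F(λz) = λ·F(z) for every λ ∈ ℂ (λ acting by left quaternion multiplication). Consequently F descends to a well-defined surjective map π: ℙ(ℂ⁴) → ℙ(ℍ²) between the complex projective space of 1-dimensional ℂ-subspaces of ℂ⁴ and the quaternionic projective line of 1-dimensional ℍ-submodules of the left ℍ-module ℍ². Moreover, for every point w ∈ ℙ(ℍ²) there is a 2-dimensional ℂ-subspace W ⊆ ℂ⁴ such that the fibre π⁻¹(w) equals {[z] : z ∈ W, z ≠ 0} (so each fibre is a complex projective line). -/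

import Mathlib

/-!
F is a bijection ℂ⁴ → ℍ² that is semilinear along the embedding c ↦ c + 0j of ℂ into ℍ, so it
induces a surjection π of projective spaces. Since ℍ = ℂ ⊕ ℂj, the fibre of π over [v] consists of
the lines in F⁻¹(ℍv), which is the ℂ-span of F⁻¹(v) and F⁻¹(jv), a plane because v ≠ 0.
-/

open scoped Quaternion

/-- The quaternion z₁ + z₂j determined by a pair of complex numbers, writing
ℍ = ℂ ⊕ ℂj (basis 1, i, j, k; (x+iy)j = xj + yk). -/
def mkQ (z w : ℂ) : ℍ[ℝ] := ⟨z.re, z.im, w.re, w.im⟩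

/-- The map F : ℂ⁴ → ℍ², F(z₁,z₂,z₃,z₄) = (z₁+z₂j, z₃+z₄j). -/
def Fq (z : Fin 4 → ℂ) : Fin 2 → ℍ[ℝ] := ![mkQ (z 0) (z 1), mkQ (z 2) (z 3)]

lemma mkQ_mul (a b c d : ℂ) :
    mkQ a b * mkQ c d = mkQ (a * c - b * starRingEnd ℂ d) (a * d + b * starRingEnd ℂ c) := by
  ext <;> simp only [Quaternion.re_mul, Quaternion.imI_mul, Quaternion.imJ_mul,
    Quaternion.imK_mul] <;> simp [mkQ] <;> ring

lemma mkQ_add (a b c d : ℂ) : mkQ (a + c) (b + d) = mkQ a b + mkQ c d := by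
  ext <;> simp only [Quaternion.re_add, Quaternion.imI_add, Quaternion.imJ_add,
    Quaternion.imK_add] <;> simp [mkQ]

lemma mkQ_eq_zero_iff {a b : ℂ} : mkQ a b = 0 ↔ a = 0 ∧ b = 0 := by
  simp only [Quaternion.ext_iff, Quaternion.re_zero, Quaternion.imI_zero, Quaternion.imJ_zero,
    Quaternion.imK_zero]
  simp [mkQ, Complex.ext_iff, and_assoc]

lemma mkQ_eq_add_mul_j (c d : ℂ) : mkQ c d = mkQ c 0 + mkQ d 0 * mkQ 0 1 := by
  rw [mkQ_mul, ← mkQ_add]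
  simp

def complexToQuaternion : ℂ →+* ℍ[ℝ] where
  toFun c := mkQ c 0
  map_one' := rfl
  map_mul' a b := by simp [mkQ_mul]
  map_zero' := rfl
  map_add' a b := by simpa using mkQ_add a 0 b 0

lemma exists_mkQ_eq (q : ℍ[ℝ]) : ∃ c d : ℂ, mkQ c d = q :=
  ⟨⟨q.re, q.imI⟩, ⟨q.imJ, q.imK⟩, rfl⟩

lemma Fq_add (z w : Fin 4 → ℂ) : Fq (z + w) = Fq z + Fq w := by
  ext i : 1
  fin_cases i <;> simp [Fq, mkQ_add]

lemma Fq_smul (l : ℂ) (z : Fin 4 → ℂ) : Fq (l • z) = fun i => mkQ l 0 * Fq z i := by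
  ext i : 1
  fin_cases i <;> simp [Fq, mkQ_mul]

def fqSemilinear : (Fin 4 → ℂ) →ₛₗ[complexToQuaternion] (Fin 2 → ℍ[ℝ]) where
  toFun := Fq
  map_add' := Fq_add
  map_smul' := Fq_smul

def fqEquiv : (Fin 4 → ℂ) ≃ (Fin 2 → ℍ[ℝ]) where
  toFun := Fq
  invFun q := ![⟨(q 0).re, (q 0).imI⟩, ⟨(q 0).imJ, (q 0).imK⟩,
    ⟨(q 1).re, (q 1).imI⟩, ⟨(q 1).imJ, (q 1).imK⟩]
  left_inv z := by
    ext i : 1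
    fin_cases i <;> rfl
  right_inv q := by
    ext i : 1
    fin_cases i <;> rfl

lemma Fq_fqEquiv_symm (q : Fin 2 → ℍ[ℝ]) : Fq (fqEquiv.symm q) = q :=
  fqEquiv.apply_symm_apply q

lemma fqSemilinear_bijective : Function.Bijective fqSemilinear :=
  fqEquiv.bijective

lemma Fq_ne_zero {z : Fin 4 → ℂ} (hz : z ≠ 0) : Fq z ≠ 0 :=
  (map_ne_zero_iff fqSemilinear fqSemilinear_bijective.1).mpr hz

namespace Projectivization

variable {K V L W : Type*} [DivisionRing K] [AddCommGroup V] [Module K V]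
  [DivisionRing L] [AddCommGroup W] [Module L W]

lemma map_surjective {σ : K →+* L} (f : V →ₛₗ[σ] W) (hf : Function.Injective f)
    (hs : Function.Surjective f) : Function.Surjective (map f hf) := by
  intro w
  induction w with
  | h w hw =>
    obtain ⟨v, rfl⟩ := hs w
    exact ⟨mk K v (by rintro rfl; simp at hw), rfl⟩

lemma exists_mem_and_mk_eq_iff (U : Submodule K V) {z : V} (hz : z ≠ 0) :
    (∃ (z' : V) (hz' : z' ≠ 0), z' ∈ U ∧ mk K z hz = mk K z' hz') ↔ z ∈ U := by
  refine ⟨?_, fun hzU => ⟨z, hz, hzU, rfl⟩⟩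
  rintro ⟨z', hz', hz'U, hzz'⟩
  obtain ⟨a, rfl⟩ := (mk_eq_mk_iff' K z z' hz hz').mp hzz'
  exact U.smul_mem a hz'U

end Projectivization

def fibreSubmodule (v : Fin 2 → ℍ[ℝ]) : Submodule ℂ (Fin 4 → ℂ) :=
  Submodule.span ℂ {fqEquiv.symm v, fqEquiv.symm (mkQ 0 1 • v)}

lemma Fq_smul_add_smul (v : Fin 2 → ℍ[ℝ]) (c d : ℂ) :
    Fq (c • fqEquiv.symm v + d • fqEquiv.symm (mkQ 0 1 • v)) = mkQ c d • v := by
  ext i : 1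
  rw [Fq_add, Fq_smul, Fq_smul, Fq_fqEquiv_symm, Fq_fqEquiv_symm, mkQ_eq_add_mul_j c d]
  simp only [Pi.add_apply, Pi.smul_apply, smul_eq_mul, add_mul, mul_assoc]

lemma mem_fibreSubmodule_iff (v : Fin 2 → ℍ[ℝ]) (z : Fin 4 → ℂ) :
    z ∈ fibreSubmodule v ↔ ∃ q : ℍ[ℝ], q • v = Fq z := by
  rw [fibreSubmodule, Submodule.mem_span_pair]
  constructor
  · rintro ⟨c, d, rfl⟩
    exact ⟨mkQ c d, (Fq_smul_add_smul v c d).symm⟩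
  · rintro ⟨q, hq⟩
    obtain ⟨c, d, rfl⟩ := exists_mkQ_eq q
    exact ⟨c, d, fqEquiv.injective ((Fq_smul_add_smul v c d).trans hq)⟩

lemma finrank_fibreSubmodule {v : Fin 2 → ℍ[ℝ]} (hv : v ≠ 0) :
    Module.finrank ℂ (fibreSubmodule v) = 2 := by
  have hli : LinearIndependent ℂ ![fqEquiv.symm v, fqEquiv.symm (mkQ 0 1 • v)] := by
    refine LinearIndependent.pair_iff.mpr fun c d hcd => mkQ_eq_zero_iff.mp ?_
    have hFq : mkQ c d • v = 0 := by
      rw [← Fq_smul_add_smul, hcd]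
      exact map_zero fqSemilinear
    exact (smul_eq_zero.mp hFq).resolve_right hv
  rw [fibreSubmodule, ← Matrix.range_cons_cons_empty, finrank_span_eq_card hli, Fintype.card_fin]

lemma map_fqSemilinear_mk_eq_mk_iff {z : Fin 4 → ℂ} (hz : z ≠ 0) {v : Fin 2 → ℍ[ℝ]}
    (hv : v ≠ 0) :
    Projectivization.map fqSemilinear fqSemilinear_bijective.1 (.mk ℂ z hz) = .mk ℍ[ℝ] v hv ↔
      z ∈ fibreSubmodule v := by
  rw [Projectivization.map_mk, Projectivization.mk_eq_mk_iff', mem_fibreSubmodule_iff]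
  rfl

/-- F is nonvanishing away from 0 and ℂ-semilinear for left quaternion
multiplication, hence descends to a well-defined surjective map
π : ℙ(ℂ⁴) → ℙ(ℍ²) whose fibres are complex projective lines. -/
theorem stmt14 :
    (∀ z : Fin 4 → ℂ, z ≠ 0 → Fq z ≠ 0) ∧
    (∀ (l : ℂ) (z : Fin 4 → ℂ), Fq (l • z) = fun i => mkQ l 0 * Fq z i) ∧
    ∃ π : Projectivization ℂ (Fin 4 → ℂ) →
        Projectivization ℍ[ℝ] (Fin 2 → ℍ[ℝ]),
      Function.Surjective π ∧
      (∀ (z : Fin 4 → ℂ) (hz : z ≠ 0) (hF : Fq z ≠ 0),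
        π (Projectivization.mk ℂ z hz) = Projectivization.mk ℍ[ℝ] (Fq z) hF) ∧
      ∀ w : Projectivization ℍ[ℝ] (Fin 2 → ℍ[ℝ]),
        ∃ W : Submodule ℂ (Fin 4 → ℂ), Module.finrank ℂ W = 2 ∧
          ∀ p : Projectivization ℂ (Fin 4 → ℂ),
            π p = w ↔ ∃ (z : Fin 4 → ℂ) (hz : z ≠ 0),
              z ∈ W ∧ p = Projectivization.mk ℂ z hz := by
  refine ⟨fun _ => Fq_ne_zero, Fq_smul,
    Projectivization.map fqSemilinear fqSemilinear_bijective.1,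
    Projectivization.map_surjective _ _ fqSemilinear_bijective.2, fun _ _ _ => rfl, ?_⟩
  intro w
  induction w with
  | h v hv =>
    refine ⟨fibreSubmodule v, finrank_fibreSubmodule hv, fun p => ?_⟩
    induction p with
    | h z hz =>
      rw [map_fqSemilinear_mk_eq_mk_iff, Projectivization.exists_mem_and_mk_eq_iff]
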